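/- arXiv:1609.06085 — 2 statements merged into one kernel-verified Lean document; each statement's English description precedes it below -/
import Mathlib

section
/- Let S be a monoid with zero 0_S and identity 1_S, let λ be a nonempty set, and let σ be any automorphism of the Brandt λ⁰-extension B⁰_λ(S). Then there exist an automorphism h : S → S of the semigroup S, a bijection φ : λ → λ, and a map u : λ → H₁ into the group of units H₁ of S such that σ(α, s, β) = (φ(α), u(α)·h(s)·(u(β))⁻¹, φ(β)) for all α, β ∈ λ and all nonzero s ∈ S, and σ(0) = 0. -/
/-- The Brandt λ⁰-extension `B⁰_Λ(S)` of a semigroup `S` with zero: its underlying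
set is `(Λ × (S \ {0_S}) × Λ) ∪ {0}`, where `none` plays the role of the zero `0`. -/
def Brandt (Λ S : Type*) [Zero S] : Type _ :=
  Option (Λ × {s : S // s ≠ 0} × Λ)

namespace Brandt

variable {Λ S : Type*}

instance [Zero S] : Zero (Brandt Λ S) := ⟨none⟩

open Classical in
/-- `(α, a, β)·(γ, b, δ) = (α, ab, δ)` if `β = γ` and `ab ≠ 0_S`, and `0` otherwise;
`0` is a two-sided zero. -/
noncomputable instance [Zero S] [Mul S] : Mul (Brandt Λ S) :=
  ⟨fun x y =>
    match x, y with
    | some (α, a, β), some (γ, b, δ) =>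
        if h : β = γ ∧ a.1 * b.1 ≠ 0 then some (α, ⟨a.1 * b.1, h.2⟩, δ) else 0
    | _, _ => 0⟩

open Classical in
/-- `Brandt.mk α s β` is the element `(α, s, β)` of `B⁰_Λ(S)` if `s ≠ 0`, and `0` otherwise. -/
noncomputable def mk [Zero S] (α : Λ) (s : S) (β : Λ) : Brandt Λ S :=
  if h : s ≠ 0 then some (α, ⟨s, h⟩, β) else 0

end Brandt

/-- An automorphism of a semigroup: a bijective map preserving the multiplication. -/
def IsSemigroupAut {T : Type*} [Mul T] (σ : T → T) : Prop :=
  Function.Bijective σ ∧ ∀ x y : T, σ (x * y) = σ x * σ y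

/-!
`σ` permutes the idempotents `(α, 1, α)`, which defines `φ`. Since
`(α, s, β) = (α, 1, α) * (α, s, β) * (β, 1, β)`, we get `σ (α, s, β) = (φ α, G α β s, φ β)`, and
as `Brandt.mk α 0 β = 0` this holds for every `s`, including `0`. Multiplicativity of `σ` then
reads `G α δ (a * b) = G α β a * G β δ b` for all `a` and `b`, with no case distinction on
`a * b = 0`. Fixing `α₀`, the map `h = G α₀ α₀` is an automorphism of `S`, `u α = G α α₀ 1` is a
unit with inverse `G α₀ α 1`, and `s = 1 * s * 1` gives `G α β s = u α * h s * (u β)⁻¹`.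
-/

namespace Brandt

variable {Λ S : Type*}

section Zero

variable [Zero S]

@[simp]
lemma mk_zero (α β : Λ) : mk α (0 : S) β = 0 := dif_neg (not_not.2 rfl)

lemma mk_of_ne_zero {a : S} (ha : a ≠ 0) (α β : Λ) : mk α a β = some (α, ⟨a, ha⟩, β) :=
  dif_pos ha

@[simp]
lemma mk_eq_zero_iff {α β : Λ} {a : S} : mk α a β = 0 ↔ a = 0 := by
  refine ⟨fun h => ?_, fun h => h ▸ mk_zero α β⟩
  by_contra ha
  rw [mk_of_ne_zero ha] at h
  exact Option.some_ne_none _ h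

lemma eq_and_eq_of_mk_eq_mk {α β γ δ : Λ} {a b : S} (ha : a ≠ 0)
    (h : mk α a β = mk γ b δ) : α = γ ∧ β = δ := by
  have hb : b ≠ 0 := fun hb => ha (mk_eq_zero_iff.1 (h.trans (hb ▸ mk_zero γ δ)))
  rw [mk_of_ne_zero ha, mk_of_ne_zero hb] at h
  cases h
  exact ⟨rfl, rfl⟩

lemma mk_inj {α β : Λ} {a b : S} : mk α a β = mk α b β ↔ a = b := by
  refine ⟨fun h => ?_, congrArg (mk α · β)⟩
  by_cases ha : a = 0
  · rw [ha, mk_zero, eq_comm, mk_eq_zero_iff] at h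
    rw [ha, h]
  · have hb : b ≠ 0 := fun hb => ha (mk_eq_zero_iff.1 (h.trans (hb ▸ mk_zero α β)))
    rw [mk_of_ne_zero ha, mk_of_ne_zero hb] at h
    cases h
    rfl

lemma exists_eq_mk [Nonempty Λ] (x : Brandt Λ S) : ∃ α a β, x = mk α a β := by
  rcases x with _ | ⟨α, a, β⟩
  · obtain ⟨α⟩ := ‹Nonempty Λ›
    exact ⟨α, 0, α, (mk_zero α α).symm⟩
  · exact ⟨α, a, β, (mk_of_ne_zero a.2 α β).symm⟩

end Zero

section Mul

variable [MulZeroClass S]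

protected lemma zero_mul (x : Brandt Λ S) : 0 * x = 0 := rfl

protected lemma mul_zero (x : Brandt Λ S) : x * 0 = 0 := by
  rcases x with _ | _ <;> rfl

lemma mk_mul_mk_self (α β δ : Λ) (a b : S) : mk α a β * mk β b δ = mk α (a * b) δ := by
  by_cases ha : a = 0
  · rw [ha, zero_mul, mk_zero, mk_zero, Brandt.zero_mul]
  by_cases hb : b = 0
  · rw [hb, mul_zero, mk_zero, mk_zero, Brandt.mul_zero]
  rw [mk_of_ne_zero ha, mk_of_ne_zero hb]
  by_cases hab : a * b = 0
  · rw [hab, mk_zero]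
    exact dif_neg fun h => h.2 hab
  · rw [mk_of_ne_zero hab]
    exact dif_pos ⟨rfl, hab⟩

lemma mk_mul_mk_of_ne {α β γ δ : Λ} (h : β ≠ γ) (a b : S) : mk α a β * mk γ b δ = 0 := by
  by_cases ha : a = 0
  · rw [ha, mk_zero, Brandt.zero_mul]
  by_cases hb : b = 0
  · rw [hb, mk_zero, Brandt.mul_zero]
  rw [mk_of_ne_zero ha, mk_of_ne_zero hb]
  exact dif_neg fun h' => h h'.1

end Mul

end Brandt

namespace Brandt

variable {Λ S : Type*} [MonoidWithZero S] [Nonempty Λ]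

lemma exists_mk_one_mul_mul_mk_one_eq (α β : Λ) (x : Brandt Λ S) :
    ∃ t, mk α 1 α * x * mk β 1 β = mk α t β := by
  obtain ⟨γ, a, δ, rfl⟩ := exists_eq_mk x
  by_cases hγ : α = γ
  · subst hγ
    by_cases hδ : δ = β
    · subst hδ
      exact ⟨a, by rw [mk_mul_mk_self, mk_mul_mk_self, one_mul, mul_one]⟩
    · exact ⟨0, by rw [mk_mul_mk_self, mk_mul_mk_of_ne hδ, mk_zero]⟩
  · exact ⟨0, by rw [mk_mul_mk_of_ne hγ, Brandt.zero_mul, mk_zero]⟩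

lemma eq_mk_one_of_mul_mk_one_eq [Nontrivial S] {α : Λ} {y : Brandt Λ S}
    (h : y * mk α 1 α = mk α 1 α) : y = mk α 1 α := by
  obtain ⟨γ, a, δ, rfl⟩ := exists_eq_mk y
  by_cases hδ : δ = α
  · subst hδ
    rw [mk_mul_mk_self, mul_one] at h
    obtain ⟨rfl, -⟩ := eq_and_eq_of_mk_eq_mk one_ne_zero h.symm
    exact h
  · rw [mk_mul_mk_of_ne hδ, eq_comm, mk_eq_zero_iff] at h
    exact absurd h one_ne_zero

end Brandt

namespace IsSemigroupAut

open Brandt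

variable {Λ S : Type*}

lemma map_zero [MulZeroClass S] {σ : Brandt Λ S → Brandt Λ S} (hσ : IsSemigroupAut σ) :
    σ 0 = 0 := by
  obtain ⟨x, hx⟩ := hσ.1.2 0
  have := hσ.2 x 0
  rwa [Brandt.mul_zero, hx, Brandt.zero_mul] at this

variable [MonoidWithZero S] {σ : Brandt Λ S → Brandt Λ S} {φ : Λ → Λ} {G : Λ → Λ → S → S}

/-- If `σ (α, 1, α) = (γ, t, δ)` and `σ y = (γ, 1, γ)`, then `y * (α, 1, α)` and `(α, 1, α)` have
the same image, which forces `y = (α, 1, α)`. -/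
lemma exists_map_mk_one [Nonempty Λ] [Nontrivial S] (hσ : IsSemigroupAut σ) (α : Λ) :
    ∃ γ, σ (mk α 1 α) = mk γ 1 γ := by
  obtain ⟨γ, t, δ, he⟩ := exists_eq_mk (σ (mk α 1 α))
  obtain ⟨y, hy⟩ := hσ.1.2 (mk γ 1 γ)
  have : σ (y * mk α 1 α) = σ (mk α 1 α) := by
    rw [hσ.2, hy, he, mk_mul_mk_self, one_mul]
  rw [← eq_mk_one_of_mul_mk_one_eq (hσ.1.1 this), hy]
  exact ⟨γ, rfl⟩

lemma exists_map_mk [Nonempty Λ] (hσ : IsSemigroupAut σ)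
    (hφ : ∀ α, σ (mk α 1 α) = mk (φ α) 1 (φ α)) (α β : Λ) (s : S) :
    ∃ t, σ (mk α s β) = mk (φ α) t (φ β) := by
  have hs : mk α 1 α * mk α s β * mk β 1 β = mk α s β := by
    rw [mk_mul_mk_self, mk_mul_mk_self, one_mul, mul_one]
  rw [← hs, hσ.2, hσ.2, hφ, hφ]
  exact exists_mk_one_mul_mul_mk_one_eq _ _ _

lemma bijective_of_map_mk_one [Nonempty Λ] [Nontrivial S] (hσ : IsSemigroupAut σ)
    (hφ : ∀ α, σ (mk α 1 α) = mk (φ α) 1 (φ α)) : Function.Bijective φ := by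
  refine ⟨fun α β h => ?_, fun γ => ?_⟩
  · have : σ (mk α 1 α) = σ (mk β 1 β) := by rw [hφ, hφ, h]
    exact (eq_and_eq_of_mk_eq_mk one_ne_zero (hσ.1.1 this)).1
  · obtain ⟨y, hy⟩ := hσ.1.2 (mk γ 1 γ)
    obtain ⟨α, a, β, rfl⟩ := exists_eq_mk y
    obtain ⟨t, ht⟩ := hσ.exists_map_mk hφ α β a
    exact ⟨α, (eq_and_eq_of_mk_eq_mk one_ne_zero (hy.symm.trans ht)).1.symm⟩

lemma coeff_mul (hσ : IsSemigroupAut σ)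
    (hG : ∀ α β s, σ (mk α s β) = mk (φ α) (G α β s) (φ β)) (α β δ : Λ) (a b : S) :
    G α δ (a * b) = G α β a * G β δ b := by
  rw [← mk_inj, ← mk_mul_mk_self _ (φ β), ← hG, ← hG, ← hG, ← hσ.2, mk_mul_mk_self]

lemma coeff_one (hφ : ∀ α, σ (mk α 1 α) = mk (φ α) 1 (φ α))
    (hG : ∀ α β s, σ (mk α s β) = mk (φ α) (G α β s) (φ β)) (α : Λ) : G α α 1 = 1 := by
  rw [← mk_inj, ← hG, hφ]

lemma coeff_eq (hσ : IsSemigroupAut σ)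
    (hG : ∀ α β s, σ (mk α s β) = mk (φ α) (G α β s) (φ β)) (α β α₀ : Λ) (s : S) :
    G α β s = G α α₀ 1 * G α₀ α₀ s * G α₀ β 1 := by
  rw [← hσ.coeff_mul hG, ← hσ.coeff_mul hG, one_mul, mul_one]

lemma bijective_coeff [Nonempty Λ] (hσ : IsSemigroupAut σ)
    (hφ : ∀ α, σ (mk α 1 α) = mk (φ α) 1 (φ α))
    (hG : ∀ α β s, σ (mk α s β) = mk (φ α) (G α β s) (φ β)) (α : Λ) :
    Function.Bijective (G α α) := by
  refine ⟨fun a b h => ?_, fun t => ?_⟩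
  · have : σ (mk α a α) = σ (mk α b α) := by rw [hG, hG, h]
    exact mk_inj.1 (hσ.1.1 this)
  · obtain ⟨y, hy⟩ := hσ.1.2 (mk (φ α) t (φ α))
    obtain ⟨a, ha⟩ := exists_mk_one_mul_mul_mk_one_eq α α y
    have : σ (mk α 1 α * y * mk α 1 α) = σ y := by
      rw [hσ.2, hσ.2, hφ, hy, mk_mul_mk_self, mk_mul_mk_self, one_mul, mul_one]
    rw [ha] at this
    exact ⟨a, mk_inj.1 ((hG α α a).symm.trans (this.trans hy))⟩

end IsSemigroupAut

/-- Let `S` be a monoid with zero, `Λ` a nonempty set, and `σ` any automorphism of the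
Brandt λ⁰-extension `B⁰_Λ(S)`. Then there exist an automorphism `h` of the semigroup `S`,
a bijection `φ : Λ → Λ`, and a map `u : Λ → H₁` into the group of units `H₁` of `S` such
that `σ(α, s, β) = (φ(α), u(α)·h(s)·(u(β))⁻¹, φ(β))` for all `α, β ∈ Λ` and all nonzero
`s ∈ S`, and `σ(0) = 0`. -/
theorem stmt_1 {Λ S : Type*} [Nonempty Λ] [MonoidWithZero S]
    (σ : Brandt Λ S → Brandt Λ S) (hσ : IsSemigroupAut σ) :
    ∃ (h : S ≃* S) (φ : Λ ≃ Λ) (u : Λ → Sˣ),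
      (∀ (α β : Λ) (s : S), s ≠ 0 →
        σ (Brandt.mk α s β) = Brandt.mk (φ α) ((u α : S) * h s * ((u β)⁻¹ : Sˣ)) (φ β)) ∧
      σ 0 = 0 := by
  obtain hS | hS := subsingleton_or_nontrivial S
  · exact ⟨MulEquiv.refl S, Equiv.refl Λ, 1,
      fun _ _ s hs => absurd (Subsingleton.elim s 0) hs, hσ.map_zero⟩
  choose φ hφ using hσ.exists_map_mk_one
  choose G hG using hσ.exists_map_mk hφ
  obtain ⟨α₀⟩ := ‹Nonempty Λ›
  have hunit (α β : Λ) : G α β 1 * G β α 1 = 1 := by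
    rw [← hσ.coeff_mul hG, mul_one, IsSemigroupAut.coeff_one hφ hG]
  let u (α : Λ) : Sˣ := ⟨G α α₀ 1, G α₀ α 1, hunit α α₀, hunit α₀ α⟩
  let h : S →ₙ* S := ⟨G α₀ α₀, hσ.coeff_mul hG α₀ α₀ α₀⟩
  refine ⟨MulEquiv.ofBijective h (hσ.bijective_coeff hφ hG α₀),
    Equiv.ofBijective φ (hσ.bijective_of_map_mk_one hφ), u, fun α β s _ => ?_, hσ.map_zero⟩
  rw [hG, hσ.coeff_eq hG α β α₀]
  rfl
end

section
/- Let S be a monoid with zero 0_S and identity 1_S, λ a nonempty set, and σ an automorphism of the Brandt λ⁰-extension B⁰_λ(S). Then for every α ∈ λ there exists α' ∈ λ such that σ(α, 1_S, α) = (α', 1_S, α'). -/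
/-!
When `1_S ≠ 0_S`, `σ` maps `e = (α, 1, α)` to a nonzero idempotent; such an idempotent has the
form `(α', a, α')` and so has `e' = (α', 1, α')` as a right identity. Pulling back along `σ` gives
`e · σ⁻¹(e') = e`, and the only `x` with `e · x = e` is `e` itself, whence `σ(e) = e'`.
When `1_S = 0_S` the Brandt extension is trivial.
-/

namespace Brandt

variable {Λ S : Type*}

noncomputable instance [Zero S] [Mul S] : MulZeroClass (Brandt Λ S) where
  zero_mul x := by cases x <;> rfl
  mul_zero x := by cases x <;> rfl

instance [Zero S] [Subsingleton S] : Subsingleton (Brandt Λ S) :=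
  have : IsEmpty {s : S // s ≠ 0} := ⟨fun s => s.2 (Subsingleton.elim _ _)⟩
  inferInstanceAs (Subsingleton (Option _))

def of [Zero S] (α : Λ) (a : {s : S // s ≠ 0}) (β : Λ) : Brandt Λ S := some (α, a, β)

theorem of_ne_zero [Zero S] (α β : Λ) (a : {s : S // s ≠ 0}) : (of α a β : Brandt Λ S) ≠ 0 :=
  Option.some_ne_none _

theorem of_inj [Zero S] {α α' β β' : Λ} {a a' : {s : S // s ≠ 0}} :
    (of α a β : Brandt Λ S) = of α' a' β' ↔ α = α' ∧ a = a' ∧ β = β' :=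
  ⟨fun h => by simpa using Option.some.inj h, by rintro ⟨rfl, rfl, rfl⟩; rfl⟩

theorem exists_eq_of_of_ne_zero [Zero S] {x : Brandt Λ S} (hx : x ≠ 0) :
    ∃ α a β, x = of α a β := by
  obtain ⟨⟨α, a, β⟩, rfl⟩ := Option.ne_none_iff_exists'.1 hx
  exact ⟨α, a, β, rfl⟩

open Classical in
theorem of_mul_of [Zero S] [Mul S] (α β γ δ : Λ) (a b : {s : S // s ≠ 0}) :
    (of α a β * of γ b δ : Brandt Λ S) =
      if h : β = γ ∧ a.1 * b.1 ≠ 0 then of α ⟨a.1 * b.1, h.2⟩ δ else 0 := by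
  by_cases h : β = γ ∧ a.1 * b.1 ≠ 0
  · rw [dif_pos h]; exact dif_pos h
  · rw [dif_neg h]; exact dif_neg h

theorem mk_of_ne_zero_s12 [Zero S] (α β : Λ) {s : S} (hs : s ≠ 0) :
    (mk α s β : Brandt Λ S) = of α ⟨s, hs⟩ β :=
  dif_pos hs

section MonoidWithZero

variable [MonoidWithZero S]

theorem mk_one_ne_zero [Nontrivial S] (α : Λ) : (mk α (1 : S) α : Brandt Λ S) ≠ 0 := by
  rw [mk_of_ne_zero_s12 α α one_ne_zero]
  exact of_ne_zero _ _ _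

theorem isIdempotentElem_mk_one [Nontrivial S] (α : Λ) :
    IsIdempotentElem (mk α (1 : S) α : Brandt Λ S) := by
  rw [IsIdempotentElem, mk_of_ne_zero_s12 α α one_ne_zero, of_mul_of, dif_pos ⟨rfl, by simp⟩]
  simp

theorem of_mul_mk_one (α β : Λ) (a : {s : S // s ≠ 0}) :
    (of α a β * mk β 1 β : Brandt Λ S) = of α a β := by
  have : Nontrivial S := ⟨⟨a, 0, a.2⟩⟩
  rw [mk_of_ne_zero_s12 β β one_ne_zero, of_mul_of, dif_pos ⟨rfl, by simpa using a.2⟩]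
  simp

theorem exists_mul_mk_one_eq_self {x : Brandt Λ S} (hx : IsIdempotentElem x) (hx0 : x ≠ 0) :
    ∃ α : Λ, x * mk α 1 α = x := by
  obtain ⟨α, a, β, rfl⟩ := exists_eq_of_of_ne_zero hx0
  refine ⟨α, ?_⟩
  obtain rfl : β = α := by
    by_contra hne
    rw [IsIdempotentElem, of_mul_of, dif_neg (fun h => hne h.1)] at hx
    exact of_ne_zero _ _ _ hx.symm
  exact of_mul_mk_one _ _ a

theorem eq_mk_one_of_mk_one_mul_eq [Nontrivial S] {α : Λ} {x : Brandt Λ S}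
    (h : mk α 1 α * x = mk α 1 α) : x = mk α 1 α := by
  have hx0 : x ≠ 0 := by
    rintro rfl
    exact mk_one_ne_zero α ((mul_zero _).symm.trans h).symm
  obtain ⟨γ, b, δ, rfl⟩ := exists_eq_of_of_ne_zero hx0
  rw [mk_of_ne_zero_s12 α α one_ne_zero] at h ⊢
  rw [of_mul_of] at h
  by_cases hc : α = γ ∧ 1 * b.1 ≠ 0
  · rw [dif_pos hc] at h
    obtain ⟨rfl, _⟩ := hc
    obtain ⟨-, hb, rfl⟩ := of_inj.1 h
    exact of_inj.2 ⟨rfl, Subtype.ext (by simpa using congrArg Subtype.val hb), rfl⟩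
  · rw [dif_neg hc] at h
    exact absurd h.symm (of_ne_zero _ _ _)

end MonoidWithZero

end Brandt

theorem stmt_12_general {Λ S : Type*} [MonoidWithZero S]
    (σ : Brandt Λ S → Brandt Λ S) (hσ : IsSemigroupAut σ) (α : Λ) :
    ∃ α' : Λ, σ (Brandt.mk α (1 : S) α) = Brandt.mk α' (1 : S) α' := by
  rcases subsingleton_or_nontrivial S with _ | _
  · exact ⟨α, Subsingleton.elim _ _⟩
  set e : Brandt Λ S := Brandt.mk α 1 α
  let φ : Brandt Λ S ≃* Brandt Λ S := MulEquiv.ofBijective (⟨σ, hσ.2⟩ : Brandt Λ S →ₙ* _) hσ.1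
  have hφe : IsIdempotentElem (φ e) := (Brandt.isIdempotentElem_mk_one α).map φ
  have hφe0 : φ e ≠ 0 := (map_ne_zero_iff φ φ.injective).2 (Brandt.mk_one_ne_zero α)
  obtain ⟨α', hα'⟩ := Brandt.exists_mul_mk_one_eq_self hφe hφe0
  set e' : Brandt Λ S := Brandt.mk α' 1 α'
  have hx : e * φ.symm e' = e := φ.injective (by rw [map_mul, φ.apply_symm_apply, hα'])
  refine ⟨α', ?_⟩
  calc σ e = φ (φ.symm e') := by rw [Brandt.eq_mk_one_of_mk_one_mul_eq hx]; rfl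
    _ = e' := φ.apply_symm_apply e'

/-- Let `S` be a monoid with zero `0_S` and identity `1_S`, `Λ` a nonempty set, and
`σ` an automorphism of the Brandt λ⁰-extension `B⁰_Λ(S)`. Then for every `α ∈ Λ`
there exists `α' ∈ Λ` such that `σ(α, 1_S, α) = (α', 1_S, α')`. -/
theorem stmt_12 {Λ S : Type*} [Nonempty Λ] [MonoidWithZero S]
    (σ : Brandt Λ S → Brandt Λ S) (hσ : IsSemigroupAut σ) (α : Λ) :
    ∃ α' : Λ, σ (Brandt.mk α (1 : S) α) = Brandt.mk α' (1 : S) α' :=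
  stmt_12_general σ hσ α
end
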